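/- arXiv:1606.02109 — 2 statements merged into one kernel-verified Lean document; each statement's English description precedes it below -/
import Mathlib

section
/- Let Λ and Λ₀ be positive definite d×d real matrices, μ₀ ∈ ℝ^d, and for n ∈ ℕ and a statistic s ∈ ℝ^d define μ(n, s) = (Λ₀ + nΛ)⁻¹(Λ·s + Λ₀·μ₀). Let δ be an ℝ^d-valued random vector whose coordinates are i.i.d. Laplace(0, b) for a fixed scale b > 0. Then for every data sequence with sufficient statistics n·x̄(n), the private posterior mean μ_DP = μ(n, n·x̄(n) + δ) and the non-private posterior mean μ_NP = μ(n, n·x̄(n)) satisfy: for every α > 0, Pr{‖μ_DP − μ_NP‖₁ ≥ α} → 0 as n → ∞. (In particular, μ_DP − μ_NP = (Λ₀ + nΛ)⁻¹Λδ.) -/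
open MeasureTheory ProbabilityTheory Filter Matrix

/-- The Laplace distribution with location `0` and scale `b`,
with density `x ↦ (1/(2b)) · exp (−|x|/b)` with respect to Lebesgue measure. -/
noncomputable def laplaceMeasure (b : ℝ) : Measure ℝ :=
  volume.withDensity fun x => ENNReal.ofReal ((2 * b)⁻¹ * Real.exp (-|x| / b))

/-- The ℓ¹ norm on `ℝ^d`. -/
def l1 {d : ℕ} (v : Fin d → ℝ) : ℝ := ∑ i, |v i|

/-- The posterior mean of a Gaussian mean `μ ∼ N(μ₀, Λ₀)`, `xᵢ ∼ N(μ, Λ)` (precision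
parameterisation), as a function of the sample size `n` and the sufficient statistic
`s = n·x̄`: `μ(n, s) = (Λ₀ + nΛ)⁻¹ (Λ s + Λ₀ μ₀)`. -/
noncomputable def postMean {d : ℕ} (Λ Λ₀ : Matrix (Fin d) (Fin d) ℝ) (μ₀ : Fin d → ℝ)
    (n : ℕ) (s : Fin d → ℝ) : Fin d → ℝ :=
  (Λ₀ + (n : ℝ) • Λ)⁻¹ *ᵥ (Λ *ᵥ s + Λ₀ *ᵥ μ₀)

/-!
The noise enters the posterior mean linearly, through `(Λ₀ + nΛ)⁻¹ Λ δ`. Writing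
`Λ₀ + nΛ = n (n⁻¹Λ₀ + Λ)` and using continuity of matrix inversion at the invertible `Λ`,
`(Λ₀ + nΛ)⁻¹ = n⁻¹ (n⁻¹Λ₀ + Λ)⁻¹ → 0 · Λ⁻¹ = 0`. Hence `μ_DP − μ_NP → 0` for every outcome
of the noise, and almost sure convergence on a probability space implies convergence in
probability.
-/

section l1

variable {d : ℕ}

lemma l1_nonneg (v : Fin d → ℝ) : 0 ≤ l1 v :=
  Finset.sum_nonneg fun i _ => abs_nonneg (v i)

@[simp]
lemma l1_zero : l1 (0 : Fin d → ℝ) = 0 := by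
  simp [l1]

lemma continuous_l1 : Continuous (l1 (d := d)) :=
  continuous_finsetSum _ fun i _ => (continuous_apply i).abs

end l1

lemma postMean_add_sub_postMean {d : ℕ} (Λ Λ₀ : Matrix (Fin d) (Fin d) ℝ) (μ₀ : Fin d → ℝ)
    (n : ℕ) (s v : Fin d → ℝ) :
    postMean Λ Λ₀ μ₀ n (s + v) - postMean Λ Λ₀ μ₀ n s = (Λ₀ + (n : ℝ) • Λ)⁻¹ *ᵥ (Λ *ᵥ v) := by
  rw [postMean, postMean, ← mulVec_sub, mulVec_add]
  congr 1
  abel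

lemma Matrix.inv_smul_of_ne_zero {n K : Type*} [Fintype n] [DecidableEq n] [Field K]
    (A : Matrix n n K) {k : K} (hk : k ≠ 0) : (k • A)⁻¹ = k⁻¹ • A⁻¹ := by
  by_cases hA : IsUnit A.det
  · exact inv_smul' A (Units.mk0 k hk) hA
  · have hkA : ¬IsUnit (k • A).det := by
      rwa [det_smul, IsUnit.mul_iff, not_and_or, or_iff_right (not_not.2 (hk.isUnit.pow _))]
    rw [nonsing_inv_apply_not_isUnit _ hA, nonsing_inv_apply_not_isUnit _ hkA, smul_zero]

lemma tendsto_inv_add_natCast_smul {n : Type*} [Fintype n] [DecidableEq n]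
    (A B : Matrix n n ℝ) (hB : IsUnit B.det) :
    Tendsto (fun k : ℕ => (A + (k : ℝ) • B)⁻¹) atTop (nhds 0) := by
  have hcont : ContinuousAt (fun t : ℝ => (t • A + B)⁻¹) 0 := by
    refine ContinuousAt.comp (g := Inv.inv) ?_ (by fun_prop)
    refine continuousAt_matrix_inv _ ?_
    rw [zero_smul, zero_add, Ring.inverse_eq_inv']
    exact continuousAt_inv₀ hB.ne_zero
  have hlim : Tendsto (fun k : ℕ => (k : ℝ)⁻¹ • (((k : ℝ)⁻¹ • A + B)⁻¹)) atTop
      (nhds ((0 : ℝ) • ((0 : ℝ) • A + B)⁻¹)) :=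
    tendsto_inv_atTop_nhds_zero_nat.smul (hcont.tendsto.comp tendsto_inv_atTop_nhds_zero_nat)
  rw [zero_smul] at hlim
  refine hlim.congr' ?_
  filter_upwards [eventually_ne_atTop 0] with k hk
  have hk : (k : ℝ) ≠ 0 := Nat.cast_ne_zero.2 hk
  have hsplit : A + (k : ℝ) • B = (k : ℝ) • ((k : ℝ)⁻¹ • A + B) := by
    rw [smul_add, smul_smul, mul_inv_cancel₀ hk, one_smul, add_comm]
  rw [hsplit, inv_smul_of_ne_zero _ hk]

lemma tendsto_l1_inv_add_natCast_smul_mulVec {d : ℕ} (A B : Matrix (Fin d) (Fin d) ℝ)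
    (hB : IsUnit B.det) (v : Fin d → ℝ) :
    Tendsto (fun k : ℕ => l1 ((A + (k : ℝ) • B)⁻¹ *ᵥ v)) atTop (nhds 0) := by
  have hvec : Tendsto (fun k : ℕ => (A + (k : ℝ) • B)⁻¹ *ᵥ v) atTop (nhds 0) := by
    simpa only [Function.comp_def, id, zero_mulVec] using
      ((continuous_id.matrix_mulVec continuous_const).tendsto 0).comp
        (tendsto_inv_add_natCast_smul A B hB)
  simpa only [Function.comp_def, l1_zero] using (continuous_l1.tendsto 0).comp hvec

theorem stmt_3_general {d : ℕ} (Λ Λ₀ : Matrix (Fin d) (Fin d) ℝ)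
    (hΛ : Λ.PosDef) (μ₀ : Fin d → ℝ)
    {Ω : Type*} [MeasurableSpace Ω] (P : Measure Ω) [IsProbabilityMeasure P]
    (δ : Ω → Fin d → ℝ) (hmeas : ∀ j, Measurable fun ω => δ ω j)
    (s : ℕ → Fin d → ℝ) :
    (∀ (n : ℕ) (ω : Ω),
      postMean Λ Λ₀ μ₀ n (s n + δ ω) - postMean Λ Λ₀ μ₀ n (s n)
        = (Λ₀ + (n : ℝ) • Λ)⁻¹ *ᵥ (Λ *ᵥ δ ω)) ∧
    ∀ α : ℝ, 0 < α →
      Tendsto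
        (fun n : ℕ =>
          P {ω | α ≤ l1 (postMean Λ Λ₀ μ₀ n (s n + δ ω) - postMean Λ Λ₀ μ₀ n (s n))})
        atTop (nhds 0) := by
  have hdiff := fun n ω => postMean_add_sub_postMean Λ Λ₀ μ₀ n (s n) (δ ω)
  refine ⟨hdiff, fun α hα => ?_⟩
  have hconv : TendstoInMeasure P
      (fun (n : ℕ) ω => l1 ((Λ₀ + (n : ℝ) • Λ)⁻¹ *ᵥ (Λ *ᵥ δ ω))) atTop 0 := by
    refine tendstoInMeasure_of_tendsto_ae (fun n => ?_) (ae_of_all _ fun ω => ?_)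
    · have hcont : Continuous fun v => l1 ((Λ₀ + (n : ℝ) • Λ)⁻¹ *ᵥ (Λ *ᵥ v)) :=
        continuous_l1.comp (continuous_const.matrix_mulVec
          (continuous_const.matrix_mulVec continuous_id))
      exact (hcont.measurable.comp (measurable_pi_iff.2 hmeas)).aestronglyMeasurable
    · exact tendsto_l1_inv_add_natCast_smul_mulVec Λ₀ Λ hΛ.det_pos.ne'.isUnit (Λ *ᵥ δ ω)
  simpa only [hdiff, Pi.zero_apply, Real.dist_eq, sub_zero, abs_of_nonneg (l1_nonneg _)] using
    tendstoInMeasure_iff_dist.1 hconv α hα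

/-- **Asymptotic consistency of the Laplace-mechanism Gaussian-mean estimate.**
If `δ` has i.i.d. `Laplace(0, b)` coordinates, then for any data sequence with sufficient
statistics `s n (= n·x̄(n))`, the private posterior mean `μ_DP = μ(n, s n + δ)` and the
non-private one `μ_NP = μ(n, s n)` satisfy `μ_DP − μ_NP = (Λ₀ + nΛ)⁻¹ Λ δ` and
`Pr{‖μ_DP − μ_NP‖₁ ≥ α} → 0` for every `α > 0`. -/
theorem stmt_3 {d : ℕ} (Λ Λ₀ : Matrix (Fin d) (Fin d) ℝ)
    (hΛ : Λ.PosDef) (hΛ₀ : Λ₀.PosDef) (μ₀ : Fin d → ℝ)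
    (b : ℝ) (hb : 0 < b)
    {Ω : Type*} [MeasurableSpace Ω] (P : Measure Ω) [IsProbabilityMeasure P]
    (δ : Ω → Fin d → ℝ) (hmeas : ∀ j, Measurable fun ω => δ ω j)
    (hlaw : ∀ j, Measure.map (fun ω => δ ω j) P = laplaceMeasure b)
    (hindep : iIndepFun (m := fun _ : Fin d => (inferInstance : MeasurableSpace ℝ))
      (fun j ω => δ ω j) P)
    (s : ℕ → Fin d → ℝ) :
    (∀ (n : ℕ) (ω : Ω),
      postMean Λ Λ₀ μ₀ n (s n + δ ω) - postMean Λ Λ₀ μ₀ n (s n)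
        = (Λ₀ + (n : ℝ) • Λ)⁻¹ *ᵥ (Λ *ᵥ δ ω)) ∧
    ∀ α : ℝ, 0 < α →
      Tendsto
        (fun n : ℕ =>
          P {ω | α ≤ l1 (postMean Λ Λ₀ μ₀ n (s n + δ ω) - postMean Λ Λ₀ μ₀ n (s n))})
        atTop (nhds 0) :=
  stmt_3_general Λ Λ₀ hΛ μ₀ P δ hmeas s
end

section
/- Let ε > 0, p₁ + p₂ + p₃ = 1 with pᵢ > 0, and B_x, B_y > 0. Consider the mechanism that takes a data set of n pairs (xⱼ, yⱼ) ∈ ℝ^d × ℝ, clips each coordinate of xⱼ to [−B_x, B_x] and each yⱼ to [−B_y, B_y] to obtain (cⱼ, eⱼ), and releases (S_xx, S_xy, S_yy) where S_xx = Σⱼ cⱼcⱼᵀ + P with P a symmetric matrix whose upper-triangular (including diagonal) entries are independent Laplace(0, d(d+1)B_x²/(p₁ε)) noise, S_xy = Σⱼ eⱼcⱼ + Q with Q having independent Laplace(0, 2dB_xB_y/(p₂ε)) coordinates, and S_yy = Σⱼ eⱼ² + R with R ∼ Laplace(0, B_y²/(p₃ε)). Then this mechanism is ε-differentially private: for any two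 data sets of equal size differing in exactly one pair, the output distributions satisfy the ε-differential privacy inequality on every measurable set. -/
/-!
Write `s_D` for the vector of clipped sufficient statistics of `D` (upper-triangular entries of
`∑ cⱼcⱼᵀ`, then `∑ eⱼcⱼ`, then `∑ eⱼ²`) and `Z` for the noise vector, so that the release is a
fixed function of `s_D + Z` and the law of `Z` is the product of the Laplace laws. For
neighbouring `D`, `D'` we have `s_D + z = s_{D'} + (z + t)` with `t = s_D - s_{D'}`, and each
`|tᵢ|` is at most the sensitivity `2Bx²`, `2BxBy` or `By²` of its coordinate, because only one
summand changes and clipped values are bounded (squares even lie in `[0, By²]`).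
A Laplace(b) density satisfies `f (x - τ) ≤ exp (|τ| / b) * f x`, so translating the product
law by `t` multiplies it by at most `exp (∑ |tᵢ| / bᵢ)`; the scales are chosen so that the
sensitivities contribute exactly `p₁ε`, `p₂ε` and `p₃ε` to this sum.
-/

open MeasureTheory ProbabilityTheory

/-- Clip (project) a real number to the interval `[-B, B]`. -/
def clip (B t : ℝ) : ℝ := max (-B) (min B t)

/-- Index set for the scalar noise variables of the DiffPriSS mechanism: the `d(d+1)/2`
upper-triangular (including diagonal) entries of the noise matrix `P`, the `d` coordinates
of the noise vector `Q`, and the single noise scalar `R`. -/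
def NoiseIdx (d : ℕ) : Type := {p : Fin d × Fin d // p.1 ≤ p.2} ⊕ (Fin d ⊕ Unit)

/-- Assemble a symmetric matrix from its upper-triangular (including diagonal) entries. -/
def symMatrixOf {d : ℕ} (u : {p : Fin d × Fin d // p.1 ≤ p.2} → ℝ) (i k : Fin d) : ℝ :=
  if h : i ≤ k then u ⟨(i, k), h⟩ else u ⟨(k, i), le_of_not_ge h⟩

/-- The DiffPriSS mechanism: clip each data point `(xⱼ, yⱼ)` coordinatewise to
`[-Bx, Bx]^d × [-By, By]` obtaining `(cⱼ, eⱼ)`, and release the sufficient statistics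
`S_xx = ∑ⱼ cⱼcⱼᵀ + P`, `S_xy = ∑ⱼ eⱼcⱼ + Q`, `S_yy = ∑ⱼ eⱼ² + R` perturbed by the noise
variables `noise`. The output distribution is the law of the perturbed statistics. -/
noncomputable def diffPriSS {d n : ℕ} {Ω : Type*} [MeasurableSpace Ω] (P : Measure Ω)
    (Bx By : ℝ) (noise : NoiseIdx d → Ω → ℝ) (D : Fin n → (Fin d → ℝ) × ℝ) :
    Measure ((Fin d → Fin d → ℝ) × (Fin d → ℝ) × ℝ) :=
  Measure.map (fun ω =>
    ((fun i k => (∑ j, clip Bx ((D j).1 i) * clip Bx ((D j).1 k)) +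
        symMatrixOf (fun p => noise (Sum.inl p) ω) i k),
     (fun i => (∑ j, clip By (D j).2 * clip Bx ((D j).1 i)) +
        noise (Sum.inr (Sum.inl i)) ω),
     (∑ j, clip By (D j).2 ^ 2) + noise (Sum.inr (Sum.inr ())) ω)) P

open scoped ENNReal NNReal

namespace MeasureTheory.Measure

theorem pi_mono {ι : Type*} [Fintype ι] {α : ι → Type*} [∀ i, MeasurableSpace (α i)]
    {μ ν : ∀ i, Measure (α i)} [∀ i, SigmaFinite (μ i)] [∀ i, SigmaFinite (ν i)]
    (h : ∀ i, μ i ≤ ν i) : Measure.pi μ ≤ Measure.pi ν := by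
  refine le_iff.2 fun s hs => ?_
  rw [Measure.pi_def, Measure.pi_def, toMeasure_apply _ _ hs, toMeasure_apply _ _ hs]
  refine OuterMeasure.le_pi.2 (fun s _ => ?_) s
  exact (OuterMeasure.pi_pi_le _ s).trans (Finset.prod_le_prod' fun i _ => h i (s i))

theorem pi_smul {ι : Type*} [Fintype ι] {α : ι → Type*} [∀ i, MeasurableSpace (α i)]
    (μ : ∀ i, Measure (α i)) [∀ i, SigmaFinite (μ i)] (c : ι → ℝ≥0) :
    Measure.pi (fun i => c i • μ i) = (∏ i, c i) • Measure.pi μ := by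
  refine pi_eq fun s _ => ?_
  simp only [coe_smul, Pi.smul_apply, pi_pi, ENNReal.smul_def, smul_eq_mul,
    Finset.prod_mul_distrib, ENNReal.ofNNReal_finsetProd]

theorem pi_map_le_smul {ι : Type*} [Fintype ι] {α : ι → Type*} [∀ i, MeasurableSpace (α i)]
    {μ : ∀ i, Measure (α i)} [∀ i, SigmaFinite (μ i)] {f : ∀ i, α i → α i}
    (hf : ∀ i, Measurable (f i)) {c : ι → ℝ≥0} (h : ∀ i, (μ i).map (f i) ≤ c i • μ i) :
    (Measure.pi μ).map (fun x i => f i (x i)) ≤ (∏ i, c i) • Measure.pi μ := by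
  have : ∀ i, SigmaFinite ((μ i).map (f i)) := fun i => sigmaFinite_of_le _ (h i)
  rw [pi_map_pi fun i => (hf i).aemeasurable, ← pi_smul]
  exact pi_mono h

theorem withDensity_map_add_right_le {G : Type*} [MeasurableSpace G] [AddGroup G]
    [MeasurableAdd G] [MeasurableSub G] (ν : Measure G) [ν.IsAddRightInvariant] {f : G → ℝ≥0∞}
    (hf : Measurable f) (t : G) {c : ℝ≥0∞} (h : ∀ x, f (x - t) ≤ c * f x) :
    (ν.withDensity f).map (· + t) ≤ c • ν.withDensity f := by
  refine le_iff.2 fun A hA => ?_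
  rw [map_apply (measurable_add_const t) hA, withDensity_apply _ (hA.preimage
    (measurable_add_const t)), smul_apply, withDensity_apply _ hA, smul_eq_mul,
    ← lintegral_const_mul _ hf]
  calc ∫⁻ x in (· + t) ⁻¹' A, f x ∂ν = ∫⁻ x in (· + t) ⁻¹' A, f (x + t - t) ∂ν := by
        simp only [add_sub_cancel_right]
    _ = ∫⁻ y in A, f (y - t) ∂ν :=
        (measurePreserving_add_right ν t).setLIntegral_comp_preimage hA
          (hf.comp (measurable_sub_const t))
    _ ≤ ∫⁻ y in A, c * f y ∂ν := lintegral_mono h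

theorem map_const_add_le_smul_map {G X : Type*} [AddCommGroup G] [MeasurableSpace G]
    [MeasurableAdd G] [MeasurableSpace X] {ν : Measure G} {s s' : G} {c : ℝ≥0∞}
    (hν : ν.map (· + (s - s')) ≤ c • ν) {R : G → X} (hR : Measurable R) :
    ν.map (fun z => R (s + z)) ≤ c • ν.map (fun z => R (s' + z)) := by
  have hR' : Measurable fun z => R (s' + z) := hR.comp (measurable_const_add s')
  calc ν.map (fun z => R (s + z))
      = (ν.map (· + (s - s'))).map (fun z => R (s' + z)) := by
        rw [map_map hR' (measurable_add_const _)]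
        congr 1
        funext z
        simp only [Function.comp_apply]
        congr 1
        abel
    _ ≤ (c • ν).map (fun z => R (s' + z)) := map_mono hν hR'
    _ = c • ν.map (fun z => R (s' + z)) := Measure.map_smul _ _ _

end MeasureTheory.Measure

theorem Fintype.sum_sub_sum_eq_sub_of_forall_ne {ι M : Type*} [Fintype ι] [AddCommGroup M]
    {f g : ι → M} (j₀ : ι) (h : ∀ j, j ≠ j₀ → f j = g j) :
    ∑ j, f j - ∑ j, g j = f j₀ - g j₀ := by
  rw [← Finset.sum_sub_distrib]
  exact Finset.sum_eq_single_of_mem j₀ (Finset.mem_univ _) fun j _ hj => by rw [h j hj, sub_self]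

theorem Fintype.card_subtype_fst_le_snd (α : Type*) [Fintype α] [LinearOrder α] :
    Fintype.card {p : α × α // p.1 ≤ p.2} = (Fintype.card α + 1).choose 2 := by
  rw [← Fintype.card_congr Sym2.sortEquiv, Sym2.card]

theorem laplaceMeasure_map_add_le {b : ℝ} (hb : 0 < b) (τ : ℝ) :
    (laplaceMeasure b).map (· + τ) ≤ (Real.exp (|τ| / b)).toNNReal • laplaceMeasure b := by
  rw [ENNReal.smul_def]
  refine Measure.withDensity_map_add_right_le volume (by fun_prop) τ fun x => ?_
  change _ ≤ ENNReal.ofReal _ * _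
  rw [← ENNReal.ofReal_mul (Real.exp_nonneg _), mul_left_comm, ← Real.exp_add]
  gcongr
  rw [← add_div, div_le_div_iff_of_pos_right hb]
  linarith [abs_sub_abs_le_abs_sub x τ]

instance (b : ℝ) : SigmaFinite (laplaceMeasure b) := by unfold laplaceMeasure; infer_instance

theorem pi_laplaceMeasure_map_add_le {ι : Type*} [Fintype ι] {b : ι → ℝ} (hb : ∀ i, 0 < b i)
    (t : ι → ℝ) :
    (Measure.pi fun i => laplaceMeasure (b i)).map (· + t)
      ≤ ENNReal.ofReal (Real.exp (∑ i, |t i| / b i)) •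
          Measure.pi fun i => laplaceMeasure (b i) := by
  rw [Real.exp_sum, ENNReal.ofReal, Real.toNNReal_prod_of_nonneg fun i _ => Real.exp_nonneg _,
    ← ENNReal.smul_def]
  exact Measure.pi_map_le_smul (fun i => measurable_add_const (t i))
    fun i => laplaceMeasure_map_add_le (hb i) (t i)

theorem abs_clip_le {B : ℝ} (hB : 0 ≤ B) (t : ℝ) : |clip B t| ≤ B :=
  abs_le.2 ⟨le_max_left _ _, max_le (by linarith) (min_le_left _ _)⟩

instance (d : ℕ) : Fintype (NoiseIdx d) :=
  inferInstanceAs (Fintype ({p : Fin d × Fin d // p.1 ≤ p.2} ⊕ (Fin d ⊕ Unit)))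

noncomputable section DiffPriSS

variable {d : ℕ}

def clippedStat (Bx By : ℝ) (x : (Fin d → ℝ) × ℝ) : NoiseIdx d → ℝ
  | Sum.inl p => clip Bx (x.1 p.1.1) * clip Bx (x.1 p.1.2)
  | Sum.inr (Sum.inl i) => clip By x.2 * clip Bx (x.1 i)
  | Sum.inr (Sum.inr _) => clip By x.2 ^ 2

def sensitivity (Bx By : ℝ) : NoiseIdx d → ℝ
  | Sum.inl _ => 2 * Bx ^ 2
  | Sum.inr (Sum.inl _) => 2 * Bx * By
  | Sum.inr (Sum.inr _) => By ^ 2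

def noiseScale (d : ℕ) (ε p₁ p₂ p₃ Bx By : ℝ) : NoiseIdx d → ℝ
  | Sum.inl _ => d * (d + 1) * Bx ^ 2 / (p₁ * ε)
  | Sum.inr (Sum.inl _) => 2 * d * Bx * By / (p₂ * ε)
  | Sum.inr (Sum.inr _) => By ^ 2 / (p₃ * ε)

def unflattenStats (z : NoiseIdx d → ℝ) : (Fin d → Fin d → ℝ) × (Fin d → ℝ) × ℝ :=
  (symMatrixOf fun p => z (Sum.inl p), fun i => z (Sum.inr (Sum.inl i)),
    z (Sum.inr (Sum.inr ())))

theorem measurable_unflattenStats : Measurable (unflattenStats (d := d)) := by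
  refine .prodMk (measurable_pi_lambda _ fun i => measurable_pi_lambda _ fun k => ?_)
    (.prodMk (by fun_prop) (by fun_prop))
  unfold symMatrixOf
  split_ifs <;> fun_prop

theorem noiseScale_pos (hd : 0 < d) {ε p₁ p₂ p₃ Bx By : ℝ} (hε : 0 < ε) (hp₁ : 0 < p₁)
    (hp₂ : 0 < p₂) (hp₃ : 0 < p₃) (hBx : 0 < Bx) (hBy : 0 < By) (idx : NoiseIdx d) :
    0 < noiseScale d ε p₁ p₂ p₃ Bx By idx := by
  rcases idx with _ | _ | _ <;> simp only [noiseScale] <;> positivity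

theorem diffPriSS_eq_map {n : ℕ} {Ω : Type*} [MeasurableSpace Ω] (P : Measure Ω) (Bx By : ℝ)
    {noise : NoiseIdx d → Ω → ℝ} (hmeas : ∀ idx, Measurable (noise idx))
    (D : Fin n → (Fin d → ℝ) × ℝ) :
    diffPriSS P Bx By noise D = (P.map fun ω idx => noise idx ω).map
      fun z => unflattenStats (∑ j, clippedStat Bx By (D j) + z) := by
  rw [Measure.map_map (g := fun z => unflattenStats (∑ j, clippedStat Bx By (D j) + z))
    (measurable_unflattenStats.comp (measurable_const_add _)) (measurable_pi_lambda _ hmeas),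
    diffPriSS]
  congr 1
  funext ω
  -- `NoiseIdx` is a plain `def`, so `simp` cannot rewrite at indices such as `Sum.inl p`:
  -- the components are matched by hand through `hsum`.
  have hsum : ∀ idx, (∑ j, clippedStat Bx By (D j) + fun idx => noise idx ω) idx
      = ∑ j, clippedStat Bx By (D j) idx + noise idx ω := fun idx =>
    congrArg (· + noise idx ω) (Finset.sum_apply idx _ _)
  refine Prod.ext (funext fun i => funext fun k => ?_) (Prod.ext (funext fun i => ?_) ?_)
  · show ∑ j, clip Bx ((D j).1 i) * clip Bx ((D j).1 k)
          + symMatrixOf (fun p => noise (Sum.inl p) ω) i k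
        = symMatrixOf (fun p => (∑ j, clippedStat Bx By (D j) + fun idx => noise idx ω)
          (Sum.inl p)) i k
    unfold symMatrixOf
    split_ifs with h
    · exact (hsum (Sum.inl ⟨(i, k), h⟩)).symm
    · exact ((hsum _).trans
        (congrArg (· + _) (Finset.sum_congr rfl fun j _ => mul_comm _ _))).symm
  · exact (hsum (Sum.inr (Sum.inl i))).symm
  · exact (hsum (Sum.inr (Sum.inr ()))).symm

theorem abs_clippedStat_sub_le {Bx By : ℝ} (hBx : 0 ≤ Bx) (hBy : 0 ≤ By)
    (x x' : (Fin d → ℝ) × ℝ) (idx : NoiseIdx d) :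
    |clippedStat Bx By x idx - clippedStat Bx By x' idx| ≤ sensitivity Bx By idx := by
  have hprod : ∀ {A B a b a' b' : ℝ}, 0 ≤ A → 0 ≤ B → |a| ≤ A → |b| ≤ B → |a'| ≤ A → |b'| ≤ B →
      |a * b - a' * b'| ≤ 2 * (A * B) := fun hA hB ha hb ha' hb' => by
    refine (abs_sub _ _).trans ?_
    rw [abs_mul, abs_mul, two_mul]
    gcongr
  rcases idx with p | i | _
  · exact (hprod hBx hBx (abs_clip_le hBx _) (abs_clip_le hBx _) (abs_clip_le hBx _)
      (abs_clip_le hBx _)).trans_eq (by simp only [sensitivity]; ring)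
  · exact (hprod hBy hBx (abs_clip_le hBy _) (abs_clip_le hBx _) (abs_clip_le hBy _)
      (abs_clip_le hBx _)).trans_eq (by simp only [sensitivity]; ring)
  · have hsq : ∀ t, clip By t ^ 2 ≤ By ^ 2 := fun t =>
      sq_le_sq' (abs_le.1 (abs_clip_le hBy t)).1 (abs_le.1 (abs_clip_le hBy t)).2
    exact abs_sub_le_of_nonneg_of_le (sq_nonneg _) (hsq _) (sq_nonneg _) (hsq _)

theorem sum_sensitivity_div_noiseScale (hd : d ≠ 0) {ε p₁ p₂ p₃ Bx By : ℝ}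
    (hsum : p₁ + p₂ + p₃ = 1) (hBx : Bx ≠ 0) (hBy : By ≠ 0) :
    ∑ idx, sensitivity Bx By idx / noiseScale d ε p₁ p₂ p₃ Bx By idx = ε := by
  have hd' : (d : ℝ) ≠ 0 := Nat.cast_ne_zero.2 hd
  change ∑ idx : {p : Fin d × Fin d // p.1 ≤ p.2} ⊕ (Fin d ⊕ Unit), _ = ε
  simp only [Fintype.sum_sum_type, sensitivity, noiseScale, Finset.sum_const, Finset.card_univ,
    Fintype.card_subtype_fst_le_snd, Fintype.card_fin, Fintype.card_unit, nsmul_eq_mul,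
    Nat.cast_choose_two]
  push_cast
  field_simp
  linear_combination ε * d * hsum

end DiffPriSS

theorem stmt_11_general {d n : ℕ} (hd : 0 < d)
    (ε p₁ p₂ p₃ Bx By : ℝ) (hε : 0 < ε)
    (hp₁ : 0 < p₁) (hp₂ : 0 < p₂) (hp₃ : 0 < p₃) (hsum : p₁ + p₂ + p₃ = 1)
    (hBx : 0 < Bx) (hBy : 0 < By)
    {Ω : Type*} [MeasurableSpace Ω] (P : Measure Ω)
    (noise : NoiseIdx d → Ω → ℝ) (hmeas : ∀ idx, Measurable (noise idx))
    (hlawP : ∀ p, Measure.map (noise (Sum.inl p)) P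
      = laplaceMeasure (d * (d + 1) * Bx ^ 2 / (p₁ * ε)))
    (hlawQ : ∀ i, Measure.map (noise (Sum.inr (Sum.inl i))) P
      = laplaceMeasure (2 * d * Bx * By / (p₂ * ε)))
    (hlawR : Measure.map (noise (Sum.inr (Sum.inr ()))) P
      = laplaceMeasure (By ^ 2 / (p₃ * ε)))
    (hindep : iIndepFun noise P) :
    ∀ D D' : Fin n → (Fin d → ℝ) × ℝ,
      (∃ j₀, ∀ j, j ≠ j₀ → D j = D' j) →
      ∀ S : Set ((Fin d → Fin d → ℝ) × (Fin d → ℝ) × ℝ), MeasurableSet S →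
        diffPriSS P Bx By noise D S
          ≤ ENNReal.ofReal (Real.exp ε) * diffPriSS P Bx By noise D' S := by
  intro D D' ⟨j₀, hj⟩ S _
  set b := noiseScale d ε p₁ p₂ p₃ Bx By
  have hb : ∀ idx, 0 < b idx := noiseScale_pos hd hε hp₁ hp₂ hp₃ hBx hBy
  have hlaw : P.map (fun ω idx => noise idx ω) = Measure.pi fun idx => laplaceMeasure (b idx) := by
    rw [hindep.map_fun_eq_pi_map fun idx => (hmeas idx).aemeasurable]
    congr 1
    funext idx
    rcases idx with p | i | ⟨⟩
    exacts [hlawP p, hlawQ i, hlawR]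
  set t := clippedStat Bx By (D j₀) - clippedStat Bx By (D' j₀)
  have hshift : ∑ j, clippedStat Bx By (D j) - ∑ j, clippedStat Bx By (D' j) = t :=
    Fintype.sum_sub_sum_eq_sub_of_forall_ne j₀ fun j hne => by rw [hj j hne]
  have hbudget : ∑ idx, |t idx| / b idx ≤ ε :=
    calc ∑ idx, |t idx| / b idx ≤ ∑ idx, sensitivity Bx By idx / b idx :=
          Finset.sum_le_sum fun idx _ =>
            div_le_div_of_nonneg_right (abs_clippedStat_sub_le hBx.le hBy.le _ _ idx) (hb idx).le
      _ = ε := sum_sensitivity_div_noiseScale hd.ne' hsum hBx.ne' hBy.ne'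
  have hDP := Measure.map_const_add_le_smul_map (s := ∑ j, clippedStat Bx By (D j))
    (s' := ∑ j, clippedStat Bx By (D' j))
    (by rw [hshift]; exact pi_laplaceMeasure_map_add_le hb t) measurable_unflattenStats
  rw [diffPriSS_eq_map P Bx By hmeas D, diffPriSS_eq_map P Bx By hmeas D', hlaw]
  refine (hDP S).trans ?_
  rw [Measure.smul_apply, smul_eq_mul]
  gcongr

/-- **ε-differential privacy of the DiffPriSS sufficient-statistics release.** With
independent Laplace noise of scales `d(d+1)Bx²/(p₁ε)`, `2dBxBy/(p₂ε)` and `By²/(p₃ε)` on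
the three clipped sufficient statistics, the mechanism is `ε`-differentially private:
for data sets of equal size differing in one pair, the output distributions satisfy the
`ε`-DP inequality on every measurable set. -/
theorem stmt_11 {d n : ℕ} (hd : 0 < d)
    (ε p₁ p₂ p₃ Bx By : ℝ) (hε : 0 < ε)
    (hp₁ : 0 < p₁) (hp₂ : 0 < p₂) (hp₃ : 0 < p₃) (hsum : p₁ + p₂ + p₃ = 1)
    (hBx : 0 < Bx) (hBy : 0 < By)
    {Ω : Type*} [MeasurableSpace Ω] (P : Measure Ω) [IsProbabilityMeasure P]
    (noise : NoiseIdx d → Ω → ℝ) (hmeas : ∀ idx, Measurable (noise idx))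
    (hlawP : ∀ p, Measure.map (noise (Sum.inl p)) P
      = laplaceMeasure (d * (d + 1) * Bx ^ 2 / (p₁ * ε)))
    (hlawQ : ∀ i, Measure.map (noise (Sum.inr (Sum.inl i))) P
      = laplaceMeasure (2 * d * Bx * By / (p₂ * ε)))
    (hlawR : Measure.map (noise (Sum.inr (Sum.inr ()))) P
      = laplaceMeasure (By ^ 2 / (p₃ * ε)))
    (hindep : iIndepFun noise P) :
    ∀ D D' : Fin n → (Fin d → ℝ) × ℝ,
      (∃ j₀, ∀ j, j ≠ j₀ → D j = D' j) →
      ∀ S : Set ((Fin d → Fin d → ℝ) × (Fin d → ℝ) × ℝ), MeasurableSet S →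
        diffPriSS P Bx By noise D S
          ≤ ENNReal.ofReal (Real.exp ε) * diffPriSS P Bx By noise D' S :=
  stmt_11_general hd ε p₁ p₂ p₃ Bx By hε hp₁ hp₂ hp₃ hsum hBx hBy P noise hmeas hlawP hlawQ hlawR
    hindep
end
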